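/- Sharp isoperimetric witness: let κ = (κ_1,…,κ_L) with L ≥ 2, let ℓ₀ ∈ [L] be an index with κ_{ℓ₀} = κ_min, and let A = {ω ∈ Ω_κ : ω_i = ℓ₀ if and only if 1 ≤ i ≤ κ_min}. Then A is nonempty, |A|·binom(n, κ_min) = |Ω_κ|, and |∂A| = κ_min·(n − κ_min)·|A|. -/

import Mathlib

/-!
Let `S` be the first `κ_min` positions, so that `A` is the fiber over `S` of the map sending a
state to its `ℓ₀`-colored region. Permutations of the positions act transitively on the subsets of
size `κ_min` and carry fibers to fibers, so all `binom(n, κ_min)` fibers have the size of `A`.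
Two states of the multislice that differ in exactly two coordinates differ by a transposition;
hence the boundary edges of `A` are exactly the pairs `(ω, ω ∘ (i j))` with `ω ∈ A`, `i ∈ S`,
`j ∉ S`, and distinct triples give distinct edges.
-/

open Finset

namespace Multislice

/-- The multislice `Ω_κ`: sequences of length `n` with values in `Fin L`
in which color `ℓ` appears exactly `κ ℓ` times. -/
def slice (L n : ℕ) (κ : Fin L → ℕ) : Finset (Fin n → Fin L) :=
  Finset.univ.filter fun ω => ∀ ℓ, (Finset.univ.filter fun i => ω i = ℓ).card = κ ℓ

/-- Average of `f` with respect to the uniform distribution on `Ω`. -/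
noncomputable def expect {L n : ℕ} (Ω : Finset (Fin n → Fin L))
    (f : (Fin n → Fin L) → ℝ) : ℝ :=
  (∑ ω ∈ Ω, f ω) / Ω.card

/-- Discrete gradient `(∇^{ij} f)(ω) = f(ω^{ij}) - f(ω)`. -/
noncomputable def grad {L n : ℕ} (i j : Fin n) (f : (Fin n → Fin L) → ℝ)
    (ω : Fin n → Fin L) : ℝ :=
  f (ω ∘ Equiv.swap i j) - f ω

/-- The Dirichlet form `𝔈_κ(f,g) = (1/(2n)) Σ_{i<j} E[(∇^{ij}f)(∇^{ij}g)]`. -/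
noncomputable def dirichlet {L n : ℕ} (Ω : Finset (Fin n → Fin L))
    (f g : (Fin n → Fin L) → ℝ) : ℝ :=
  (1 / (2 * (n : ℝ))) *
    ∑ p ∈ Finset.univ.filter (fun p : Fin n × Fin n => p.1 < p.2),
      expect Ω fun ω => grad p.1 p.2 f ω * grad p.1 p.2 g ω

/-- The weighted Dirichlet form `𝔈^G_κ(f,g) = (1/2) Σ_{i<j} G_{ij} E[(∇^{ij}f)(∇^{ij}g)]`. -/
noncomputable def wDirichlet {L n : ℕ} (G : Fin n → Fin n → ℝ)
    (Ω : Finset (Fin n → Fin L)) (f g : (Fin n → Fin L) → ℝ) : ℝ :=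
  (1 / 2) *
    ∑ p ∈ Finset.univ.filter (fun p : Fin n × Fin n => p.1 < p.2),
      G p.1 p.2 * expect Ω fun ω => grad p.1 p.2 f ω * grad p.1 p.2 g ω

/-- Entropy `Ent(f) = E[f log f] - E[f] log E[f]` (note `Real.log 0 = 0`). -/
noncomputable def entropy {L n : ℕ} (Ω : Finset (Fin n → Fin L))
    (f : (Fin n → Fin L) → ℝ) : ℝ :=
  expect Ω (fun ω => f ω * Real.log (f ω)) - expect Ω f * Real.log (expect Ω f)

/-- Variance `Var(f) = E[f²] - (E[f])²`. -/
noncomputable def variance {L n : ℕ} (Ω : Finset (Fin n → Fin L))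
    (f : (Fin n → Fin L) → ℝ) : ℝ :=
  expect Ω (fun ω => f ω ^ 2) - (expect Ω f) ^ 2

/-- The edge boundary `∂A` of `A ⊆ Ω`: edges (recorded as pairs with first endpoint
in `A` and second endpoint in `Ω \ A`) between `A` and its complement, where two
states are adjacent when they differ in exactly two coordinates. -/
def edgeBoundary {L n : ℕ} (Ω A : Finset (Fin n → Fin L)) :
    Finset ((Fin n → Fin L) × (Fin n → Fin L)) :=
  (A ×ˢ (Ω \ A)).filter fun p => (Finset.univ.filter fun i => p.1 i ≠ p.2 i).card = 2

/-- The `ℓ`-colored region `ξ_ℓ(ω) = {i : ω i = ℓ}`. -/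
def xi {L n : ℕ} (ℓ : Fin L) (ω : Fin n → Fin L) : Finset (Fin n) :=
  Finset.univ.filter fun i => ω i = ℓ

/-- The parameter `κ^{∖ℓ}` obtained from `κ` by removing the `ℓ`-th entry. -/
def removeIdx {L : ℕ} (κ : Fin L → ℕ) (ℓ : Fin L) (m : Fin (L - 1)) : ℕ :=
  if (m : ℕ) < (ℓ : ℕ) then κ ⟨m, by have := m.isLt; omega⟩
  else κ ⟨(m : ℕ) + 1, by have := m.isLt; omega⟩

open Equiv

section Transposition

variable {α β : Type*} [Fintype α] [DecidableEq α] [DecidableEq β]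

lemma filter_ne_comp_swap {ω : α → β} {i j : α} (hne : ω i ≠ ω j) :
    ({k | ω k ≠ (ω ∘ swap i j) k} : Finset α) = {i, j} := by
  ext k
  rcases eq_or_ne k i with rfl | hki
  · simp [hne]
  rcases eq_or_ne k j with rfl | hkj
  · simp [hne.symm]
  · simp [swap_apply_of_ne_of_ne hki hkj, hki, hkj]

lemma eq_comp_swap_of_card_filter_ne_eq_two {ω ω' : α → β}
    (hcount : ∀ b, #{a | ω a = b} = #{a | ω' a = b}) (hd : #{a | ω a ≠ ω' a} = 2) :
    ∃ i j, ω i ≠ ω j ∧ ω' = ω ∘ swap i j := by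
  obtain ⟨i, j, hij, hset⟩ := card_eq_two.mp hd
  have hdiff : ∀ k, ω k ≠ ω' k ↔ k = i ∨ k = j := by simpa [Finset.ext_iff] using hset
  -- `ω` and `ω'` agree off `{i, j}`, so every color occurs equally often in both on `{i, j}`.
  have hpair : ∀ b, (if ω i = b then 1 else 0 : ℤ) + (if ω j = b then 1 else 0) =
      (if ω' i = b then 1 else 0) + (if ω' j = b then 1 else 0) := by
    intro b
    have hsum : ∑ k, ((if ω k = b then 1 else 0 : ℤ) - if ω' k = b then 1 else 0) = 0 := by
      rw [sum_sub_distrib, sub_eq_zero]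
      exact_mod_cast (card_filter _ _).symm.trans ((hcount b).trans (card_filter _ _))
    rw [Fintype.sum_eq_add i j hij fun k hk => by
      rw [not_not.mp ((hdiff k).not.mpr (by tauto)), sub_self]] at hsum
    linarith
  have hi : ω i ≠ ω' i := (hdiff i).mpr (.inl rfl)
  have hj : ω j ≠ ω' j := (hdiff j).mpr (.inr rfl)
  have h₁ := hpair (ω i)
  have h₂ := hpair (ω j)
  have hji : ω' j = ω i ∧ ω j ≠ ω i := by
    split_ifs at h₁ <;> simp_all
  have hij' : ω' i = ω j := by
    split_ifs at h₂ <;> simp_all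
  refine ⟨i, j, hji.2.symm, funext fun k => ?_⟩
  rcases eq_or_ne k i with rfl | hki
  · simpa using hij'
  rcases eq_or_ne k j with rfl | hkj
  · simpa using hji.1
  · simpa [swap_apply_of_ne_of_ne hki hkj, eq_comm] using (hdiff k).not.mpr (by tauto)

end Transposition

open scoped Pointwise

section Slice

variable {L n : ℕ} {κ : Fin L → ℕ}

lemma mem_slice {ω : Fin n → Fin L} : ω ∈ slice L n κ ↔ ∀ ℓ, #(xi ℓ ω) = κ ℓ := by
  simp [slice, xi]

lemma xi_comp_perm (ℓ : Fin L) (ω : Fin n → Fin L) (σ : Perm (Fin n)) :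
    xi ℓ (ω ∘ σ) = σ⁻¹ • xi ℓ ω := by
  ext k
  simp [xi, mem_inv_smul_finset_iff]

lemma comp_perm_mem_slice {ω : Fin n → Fin L} (σ : Perm (Fin n)) (hω : ω ∈ slice L n κ) :
    ω ∘ σ ∈ slice L n κ := by
  simpa [mem_slice, xi_comp_perm, card_smul_finset] using hω

lemma slice_nonempty (hn : n = ∑ ℓ, κ ℓ) : (slice L n κ).Nonempty := by
  subst hn
  let e : (Σ ℓ, Fin (κ ℓ)) ≃ Fin (∑ ℓ, κ ℓ) := finSigmaFinEquiv
  refine ⟨fun k => (e.symm k).1, mem_slice.mpr fun ℓ => ?_⟩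
  have : xi ℓ (fun k => (e.symm k).1) =
      univ.map ((Function.Embedding.sigmaMk ℓ).trans e.toEmbedding) := by
    ext k
    obtain ⟨⟨m, a⟩, rfl⟩ := e.surjective k
    simp only [xi, mem_filter, mem_univ, true_and, Equiv.symm_apply_apply, mem_map]
    constructor
    · rintro rfl
      exact ⟨a, rfl⟩
    · rintro ⟨b, hb⟩
      exact congrArg Sigma.fst (e.injective hb).symm
  rw [this, card_map, card_univ, Fintype.card_fin]

end Slice

section RegionFiber

variable {L n : ℕ} (κ : Fin L → ℕ) (ℓ : Fin L)

def regionFiber (S : Finset (Fin n)) : Finset (Fin n → Fin L) :=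
  (slice L n κ).filter fun ω => xi ℓ ω = S

variable {κ ℓ} {S T : Finset (Fin n)}

lemma mem_regionFiber {ω : Fin n → Fin L} :
    ω ∈ regionFiber κ ℓ S ↔ ω ∈ slice L n κ ∧ xi ℓ ω = S :=
  mem_filter

lemma card_regionFiber_eq (hST : #S = #T) : #(regionFiber κ ℓ S) = #(regionFiber κ ℓ T) := by
  have := Set.powersetCard.isPretransitive (α := Fin n) (n := #S)
  obtain ⟨σ, hσ⟩ := MulAction.exists_smul_eq (Perm (Fin n))
    (⟨S, rfl⟩ : Set.powersetCard (Fin n) #S) ⟨T, hST.symm⟩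
  replace hσ : σ • S = T := congrArg Subtype.val hσ
  refine card_bij' (fun ω _ => ω ∘ ⇑σ⁻¹) (fun ω _ => ω ∘ σ) (fun ω hω => ?_) (fun ω hω => ?_)
    (fun ω _ => by ext; simp) (fun ω _ => by ext; simp)
  · rw [mem_regionFiber] at hω ⊢
    exact ⟨comp_perm_mem_slice _ hω.1, by rw [xi_comp_perm, inv_inv, hω.2, hσ]⟩
  · rw [mem_regionFiber] at hω ⊢
    exact ⟨comp_perm_mem_slice _ hω.1, by rw [xi_comp_perm, hω.2, ← hσ, inv_smul_smul]⟩

lemma regionFiber_nonempty (hn : n = ∑ ℓ, κ ℓ) (hS : #S = κ ℓ) :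
    (regionFiber κ ℓ S).Nonempty := by
  obtain ⟨ω, hω⟩ := slice_nonempty hn
  have hfiber : #(regionFiber κ ℓ (xi ℓ ω)) ≠ 0 :=
    card_ne_zero_of_mem (mem_regionFiber.mpr ⟨hω, rfl⟩)
  rw [← card_pos, card_regionFiber_eq (hS.trans (mem_slice.mp hω ℓ).symm)]
  exact Nat.pos_of_ne_zero hfiber

lemma card_regionFiber_mul_choose (hS : #S = κ ℓ) :
    #(regionFiber κ ℓ S) * n.choose (κ ℓ) = #(slice L n κ) := by
  have hmaps : ∀ ω ∈ slice L n κ, xi ℓ ω ∈ powersetCard (κ ℓ) (univ : Finset (Fin n)) :=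
    fun ω hω => mem_powersetCard.mpr ⟨subset_univ _, mem_slice.mp hω ℓ⟩
  rw [card_eq_sum_card_fiberwise hmaps]
  change _ = ∑ T ∈ powersetCard (κ ℓ) univ, #(regionFiber κ ℓ T)
  rw [sum_const_nat fun T hT => card_regionFiber_eq ((mem_powersetCard.mp hT).2.trans hS.symm),
    card_powersetCard, card_univ, Fintype.card_fin, mul_comm]

end RegionFiber

section EdgeBoundary

variable {L n : ℕ} {κ : Fin L → ℕ} {ℓ : Fin L} {S : Finset (Fin n)}

def swapEdge (p : (Fin n → Fin L) × Fin n × Fin n) : (Fin n → Fin L) × (Fin n → Fin L) :=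
  (p.1, p.1 ∘ swap p.2.1 p.2.2)

lemma mem_iff_of_mem_regionFiber {ω : Fin n → Fin L} (hω : ω ∈ regionFiber κ ℓ S) (k : Fin n) :
    k ∈ S ↔ ω k = ℓ := by
  simp [← (mem_regionFiber.mp hω).2, xi]

lemma xi_comp_swap_of_ne {ω : Fin n → Fin L} {i j : Fin n} (hi : ω i ≠ ℓ) (hj : ω j ≠ ℓ) :
    xi ℓ (ω ∘ swap i j) = xi ℓ ω := by
  ext k
  rcases eq_or_ne k i with rfl | hki
  · simp [xi, hi, hj]
  rcases eq_or_ne k j with rfl | hkj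
  · simp [xi, hi, hj]
  · simp [xi, swap_apply_of_ne_of_ne hki hkj]

lemma edgeBoundary_regionFiber :
    edgeBoundary (slice L n κ) (regionFiber κ ℓ S) =
      (regionFiber κ ℓ S ×ˢ (S ×ˢ Sᶜ)).image swapEdge := by
  ext ⟨ω, ω'⟩
  simp only [edgeBoundary, swapEdge, mem_filter, mem_product, mem_sdiff, mem_image, Prod.exists,
    Prod.mk.injEq, mem_compl]
  constructor
  · rintro ⟨⟨hω, hω', hω'A⟩, hd⟩
    have hcount (b : Fin L) : #(xi b ω) = #(xi b ω') :=
      (mem_slice.mp (mem_regionFiber.mp hω).1 b).trans (mem_slice.mp hω' b).symm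
    obtain ⟨i, j, hne, rfl⟩ := eq_comp_swap_of_card_filter_ne_eq_two hcount hd
    have hS := mem_iff_of_mem_regionFiber hω
    by_cases hi : i ∈ S <;> by_cases hj : j ∈ S
    · exact absurd (((hS i).mp hi).trans ((hS j).mp hj).symm) hne
    · exact ⟨ω, i, j, ⟨hω, hi, hj⟩, rfl, rfl⟩
    · exact ⟨ω, j, i, ⟨hω, hj, hi⟩, rfl, by rw [swap_comm]⟩
    · refine absurd (mem_regionFiber.mpr ⟨hω', ?_⟩) hω'A
      rw [xi_comp_swap_of_ne ((hS i).not.mp hi) ((hS j).not.mp hj), (mem_regionFiber.mp hω).2]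
  · rintro ⟨ω, i, j, ⟨hω, hi, hj⟩, rfl, rfl⟩
    have hS := mem_iff_of_mem_regionFiber hω
    have hne : ω i ≠ ω j := ((hS i).mp hi).symm ▸ fun h => hj ((hS j).mpr h.symm)
    refine ⟨⟨hω, comp_perm_mem_slice _ (mem_regionFiber.mp hω).1, fun h => hj ?_⟩, ?_⟩
    · simpa [← (hS i).mp hi] using (mem_iff_of_mem_regionFiber h j).mpr
    · rw [filter_ne_comp_swap hne, card_pair fun h => hne (congrArg ω h)]

lemma injOn_swapEdge :
    Set.InjOn swapEdge
      (↑(regionFiber κ ℓ S ×ˢ (S ×ˢ Sᶜ)) : Set ((Fin n → Fin L) × Fin n × Fin n)) := by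
  rintro ⟨ω, i, j⟩ hp ⟨ω', i', j'⟩ hp' heq
  simp only [coe_product, Set.mem_prod, mem_coe, mem_compl] at hp hp'
  simp only [swapEdge, Prod.mk.injEq] at heq
  obtain ⟨rfl, hswap⟩ := heq
  have hS := mem_iff_of_mem_regionFiber hp.1
  have hne {a b : Fin n} (ha : a ∈ S) (hb : b ∉ S) : ω a ≠ ω b :=
    ((hS a).mp ha).symm ▸ fun h => hb ((hS b).mpr h.symm)
  have hpair : ({i, j} : Finset (Fin n)) = {i', j'} := by
    rw [← filter_ne_comp_swap (hne hp.2.1 hp.2.2), ← filter_ne_comp_swap (hne hp'.2.1 hp'.2.2),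
      hswap]
  have hi : i ∈ ({i', j'} : Finset (Fin n)) := hpair ▸ mem_insert_self i {j}
  have hj : j ∈ ({i', j'} : Finset (Fin n)) := hpair ▸ mem_insert_of_mem (mem_singleton_self j)
  simp only [mem_insert, mem_singleton] at hi hj
  grind

lemma card_edgeBoundary_regionFiber :
    #(edgeBoundary (slice L n κ) (regionFiber κ ℓ S)) = #S * (n - #S) * #(regionFiber κ ℓ S) := by
  rw [edgeBoundary_regionFiber, card_image_of_injOn injOn_swapEdge, card_product, card_product,
    card_compl, Fintype.card_fin]
  ring

end EdgeBoundary

theorem multislice_sharp_witness_general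
    (L : ℕ) (κ : Fin L → ℕ)
    (n : ℕ) (hn : n = ∑ ℓ, κ ℓ)
    (κmin : ℕ)
    (ℓ₀ : Fin L) (hℓ₀ : κ ℓ₀ = κmin) :
    ((slice L n κ).filter fun ω => ∀ i : Fin n, (ω i = ℓ₀ ↔ (i : ℕ) < κmin)).Nonempty ∧
    ((slice L n κ).filter fun ω => ∀ i : Fin n, (ω i = ℓ₀ ↔ (i : ℕ) < κmin)).card *
        n.choose κmin = (slice L n κ).card ∧
    (edgeBoundary (slice L n κ)
        ((slice L n κ).filter fun ω => ∀ i : Fin n, (ω i = ℓ₀ ↔ (i : ℕ) < κmin))).card =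
      κmin * (n - κmin) *
        ((slice L n κ).filter fun ω => ∀ i : Fin n, (ω i = ℓ₀ ↔ (i : ℕ) < κmin)).card := by
  subst hℓ₀
  have hκn : κ ℓ₀ ≤ n := hn ▸ single_le_sum (fun _ _ => Nat.zero_le _) (mem_univ ℓ₀)
  set S : Finset (Fin n) := {i | (i : ℕ) < κ ℓ₀}
  have hS : #S = κ ℓ₀ := by rw [Fin.card_filter_val_lt, min_eq_right hκn]
  have hA : ((slice L n κ).filter fun ω => ∀ i : Fin n, (ω i = ℓ₀ ↔ (i : ℕ) < κ ℓ₀)) =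
      regionFiber κ ℓ₀ S :=
    filter_congr fun ω _ => by simp [Finset.ext_iff, xi, S]
  rw [hA]
  refine ⟨regionFiber_nonempty hn hS, card_regionFiber_mul_choose hS, ?_⟩
  rw [card_edgeBoundary_regionFiber, hS]

/-- sharp isoperimetric witness `A = {ω : ω_i = ℓ₀ ↔ i ≤ κ_min}`. -/
theorem multislice_sharp_witness
    (L : ℕ) (hL : 2 ≤ L) (κ : Fin L → ℕ) (hκ : ∀ ℓ, 0 < κ ℓ)
    (n : ℕ) (hn : n = ∑ ℓ, κ ℓ)
    (κmin : ℕ) (hmin : ∀ ℓ, κmin ≤ κ ℓ) (hmem : ∃ ℓ, κ ℓ = κmin)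
    (ℓ₀ : Fin L) (hℓ₀ : κ ℓ₀ = κmin) :
    ((slice L n κ).filter fun ω => ∀ i : Fin n, (ω i = ℓ₀ ↔ (i : ℕ) < κmin)).Nonempty ∧
    ((slice L n κ).filter fun ω => ∀ i : Fin n, (ω i = ℓ₀ ↔ (i : ℕ) < κmin)).card *
        n.choose κmin = (slice L n κ).card ∧
    (edgeBoundary (slice L n κ)
        ((slice L n κ).filter fun ω => ∀ i : Fin n, (ω i = ℓ₀ ↔ (i : ℕ) < κmin))).card =
      κmin * (n - κmin) *
        ((slice L n κ).filter fun ω => ∀ i : Fin n, (ω i = ℓ₀ ↔ (i : ℕ) < κmin)).card :=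
  multislice_sharp_witness_general L κ n hn κmin ℓ₀ hℓ₀

end Multislice
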